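/- arXiv:2001.05553 — 5 statements merged into one kernel-verified Lean document; each statement's English description precedes it below -/
import Mathlib

section
/- For natural numbers n, m, l with 1 ≤ l, 1 ≤ m ≤ n, the binomial coefficients satisfy binom(n,m) / binom(l·n, l·m) ≤ (m/n)^{(l−1)·m}. -/
/-!
Since `C(n + 1, k + 1) = (n + 1) / (k + 1) · C(n, k)` and `(n + 1) / (k + 1) ≤ n / k` for `k ≤ n`,
induction on `k` gives `(n / k) ^ k ≤ C(n, k)`.
Picking one term of Vandermonde's identity makes binomial coefficients supermultiplicative,
`C(a, c) C(b, d) ≤ C(a + b, c + d)`; splitting `l n` into `n + (l - 1) n` then gives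
`C(l n, l m) ≥ C(n, m) (n / m) ^ ((l - 1) m)`, which is the claim.
-/

namespace Nat

theorem choose_mul_choose_le_choose_add (a b c d : ℕ) :
    a.choose c * b.choose d ≤ (a + b).choose (c + d) := by
  rw [add_choose_eq]
  exact Finset.single_le_sum (f := fun ij : ℕ × ℕ => a.choose ij.1 * b.choose ij.2)
    (fun _ _ => Nat.zero_le _) (Finset.HasAntidiagonal.mem_antidiagonal (a := (c, d)) |>.2 rfl)

variable {α : Type*} [Field α] [LinearOrder α] [IsStrictOrderedRing α]

theorem cast_choose_succ_succ (n k : ℕ) :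
    ((n + 1).choose (k + 1) : α) = (n + 1) / (k + 1) * n.choose k := by
  rw [div_mul_eq_mul_div, eq_div_iff (by positivity)]
  exact_mod_cast (add_one_mul_choose_eq n k).symm

theorem succ_div_succ_pow_le_div_pow {n k : ℕ} (h : k ≤ n) :
    (((n : α) + 1) / (k + 1)) ^ k ≤ ((n : α) / k) ^ k := by
  rcases k.eq_zero_or_pos with rfl | hk
  · simp
  · refine pow_le_pow_left₀ (by positivity) ?_ k
    rw [div_le_div_iff₀ (by positivity) (by positivity)]
    have : (k : α) ≤ n := by exact_mod_cast h
    linarith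

theorem div_pow_le_choose {n k : ℕ} (h : k ≤ n) : ((n : α) / k) ^ k ≤ n.choose k := by
  induction k generalizing n with
  | zero => simp
  | succ k ih =>
    obtain ⟨n, rfl⟩ : ∃ n', n = n' + 1 := ⟨n - 1, by omega⟩
    have hkn : k ≤ n := by omega
    push_cast
    calc (((n : α) + 1) / (k + 1)) ^ (k + 1)
        = ((n : α) + 1) / (k + 1) * (((n : α) + 1) / (k + 1)) ^ k := _root_.pow_succ' ..
      _ ≤ ((n : α) + 1) / (k + 1) * ((n : α) / k) ^ k := by
        gcongr ?_ * ?_; exact succ_div_succ_pow_le_div_pow hkn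
      _ ≤ ((n : α) + 1) / (k + 1) * n.choose k := by gcongr; exact ih hkn
      _ = (n + 1).choose (k + 1) := (cast_choose_succ_succ n k).symm

theorem div_pow_mul_le_choose_mul {n k : ℕ} (h : k ≤ n) (j : ℕ) :
    ((n : α) / k) ^ (j * k) ≤ (j * n).choose (j * k) := by
  induction j with
  | zero => simp
  | succ j ih =>
    calc ((n : α) / k) ^ ((j + 1) * k) = ((n : α) / k) ^ (j * k) * ((n : α) / k) ^ k := by
          rw [add_one_mul, pow_add]
      _ ≤ (j * n).choose (j * k) * n.choose k := by
          gcongr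
          exact div_pow_le_choose h
      _ ≤ ((j + 1) * n).choose ((j + 1) * k) := by
          rw [add_one_mul, add_one_mul]
          exact_mod_cast choose_mul_choose_le_choose_add (j * n) n (j * k) k

end Nat

theorem stmt5 {n m l : ℕ} (hl : 1 ≤ l) (hm : 1 ≤ m) (hmn : m ≤ n) :
    (n.choose m : ℝ) / ((l * n).choose (l * m) : ℝ) ≤ ((m : ℝ) / n) ^ ((l - 1) * m) := by
  obtain ⟨j, rfl⟩ : ∃ j, l = j + 1 := ⟨l - 1, by omega⟩
  rw [Nat.add_sub_cancel]
  have hchoose : (0 : ℝ) < n.choose m := by exact_mod_cast Nat.choose_pos hmn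
  have hratio : (0 : ℝ) < (n : ℝ) / m := by
    have : 0 < n := by omega
    positivity
  have hsplit : ((n : ℝ) / m) ^ (j * m) * n.choose m ≤ ((j + 1) * n).choose ((j + 1) * m) := by
    calc ((n : ℝ) / m) ^ (j * m) * n.choose m ≤ (j * n).choose (j * m) * n.choose m := by
          gcongr; exact Nat.div_pow_mul_le_choose_mul hmn j
      _ ≤ ((j + 1) * n).choose ((j + 1) * m) := by
          rw [add_one_mul, add_one_mul]
          exact_mod_cast Nat.choose_mul_choose_le_choose_add (j * n) n (j * m) m
  calc (n.choose m : ℝ) / ((j + 1) * n).choose ((j + 1) * m)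
      ≤ n.choose m / (((n : ℝ) / m) ^ (j * m) * n.choose m) := by gcongr
    _ = ((m : ℝ) / n) ^ (j * m) := by rw [div_mul_cancel_right₀ hchoose.ne', ← inv_pow, inv_div]
end

section
/- For natural numbers n, m, l with 2 ≤ l and 1 ≤ m ≤ n, the binomial coefficients satisfy binom(n,m)² / binom(l·n, l·m) ≤ (m/n)^{(l−2)·m}. -/
open Finset

lemma choose_mul_choose_le_aux (a b c d : ℕ) :
    a.choose c * b.choose d ≤ (a + b).choose (c + d) := by
  rw [Nat.add_choose_eq]
  exact Finset.single_le_sum (f := fun (ij : ℕ × ℕ) => a.choose ij.1 * b.choose ij.2) (a := (c, d))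
    (fun i _ => Nat.zero_le _) (Finset.HasAntidiagonal.mem_antidiagonal.mpr rfl)

lemma choose_pow_le_aux (n m : ℕ) : ∀ l : ℕ, (n.choose m) ^ l ≤ (l * n).choose (l * m)
  | 0 => by simp
  | (k + 1) => by
    calc (n.choose m) ^ (k + 1) = n.choose m * (n.choose m) ^ k := by ring
      _ ≤ n.choose m * ((k * n).choose (k * m)) :=
          Nat.mul_le_mul_left _ (choose_pow_le_aux n m k)
      _ ≤ (n + k * n).choose (m + k * m) := choose_mul_choose_le_aux _ _ _ _
      _ = ((k + 1) * n).choose ((k + 1) * m) := by ring_nf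

lemma pow_mul_factorial_le_aux {n m : ℕ} (hmn : m ≤ n) :
    n ^ m * m.factorial ≤ m ^ m * n.descFactorial m := by
  have h1 : n ^ m * m.factorial = ∏ i ∈ range m, (n * (m - i)) := by
    rw [Finset.prod_mul_distrib, Finset.prod_const, ← Nat.descFactorial_self,
      Nat.descFactorial_eq_prod_range, Finset.card_range]
  have h2 : m ^ m * n.descFactorial m = ∏ i ∈ range m, (m * (n - i)) := by
    rw [Finset.prod_mul_distrib, Finset.prod_const, Nat.descFactorial_eq_prod_range,
      Finset.card_range]
  rw [h1, h2]
  apply Finset.prod_le_prod' 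
  intro i hi
  have hi' : i < m := Finset.mem_range.mp hi
  have e1 : n * (m - i) + n * i = n * m := by rw [← Nat.mul_add]; congr 1; omega
  have e2 : m * (n - i) + m * i = m * n := by rw [← Nat.mul_add]; congr 1; omega
  have e3 : m * i ≤ n * i := Nat.mul_le_mul_right i hmn
  have e4 : n * m = m * n := Nat.mul_comm n m
  omega

lemma pow_le_choose_aux {n m : ℕ} (hm : 1 ≤ m) (hmn : m ≤ n) :
    ((n : ℝ) / m) ^ m ≤ n.choose m := by
  have hm0 : (0 : ℝ) < m := by positivity
  rw [div_pow, div_le_iff₀ (by positivity)]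
  have key : (n : ℝ) ^ m * m.factorial ≤ (m : ℝ) ^ m * n.descFactorial m := by
    exact_mod_cast pow_mul_factorial_le_aux hmn
  have hdf : (n.descFactorial m : ℝ) = m.factorial * n.choose m := by
    exact_mod_cast congrArg (Nat.cast : ℕ → ℝ) (Nat.descFactorial_eq_factorial_mul_choose n m)
  have hfac : (0 : ℝ) < m.factorial := by exact_mod_cast m.factorial_pos
  rw [hdf] at key
  have hre : ((m:ℝ) ^ m * ((m.factorial : ℝ) * n.choose m)) =
      ((n.choose m : ℝ) * (m:ℝ) ^ m) * m.factorial := by ring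
  rw [hre] at key
  exact le_of_mul_le_mul_right key hfac

theorem stmt6 {n m l : ℕ} (hl : 2 ≤ l) (hm : 1 ≤ m) (hmn : m ≤ n) :
    ((n.choose m : ℝ)) ^ 2 / ((l * n).choose (l * m) : ℝ) ≤ ((m : ℝ) / n) ^ ((l - 2) * m) := by
  have hn : 1 ≤ n := le_trans hm hmn
  have hC : 0 < (n.choose m : ℝ) := by exact_mod_cast Nat.choose_pos hmn
  have hCl : (n.choose m : ℝ) ^ l ≤ ((l * n).choose (l * m) : ℝ) := by
    exact_mod_cast choose_pow_le_aux n m l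
  have hCl0 : (0 : ℝ) < (n.choose m : ℝ) ^ l := by positivity
  have step1 : ((n.choose m : ℝ)) ^ 2 / ((l * n).choose (l * m) : ℝ) ≤
      ((n.choose m : ℝ)) ^ 2 / ((n.choose m : ℝ)) ^ l :=
    div_le_div_of_nonneg_left (by positivity) hCl0 hCl
  have hsplit : ((n.choose m : ℝ)) ^ l = ((n.choose m : ℝ)) ^ 2 * ((n.choose m : ℝ)) ^ (l - 2) := by
    rw [← pow_add]; congr 1; omega
  have step2 : ((n.choose m : ℝ)) ^ 2 / ((n.choose m : ℝ)) ^ l =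
      (1 / (n.choose m : ℝ)) ^ (l - 2) := by
    rw [hsplit, div_pow, one_pow]
    field_simp
  have hnm : (0 : ℝ) < (n : ℝ) / m := by positivity
  have hinv : 1 / (n.choose m : ℝ) ≤ ((m : ℝ) / n) ^ m := by
    have h1 : ((n : ℝ) / m) ^ m ≤ n.choose m := pow_le_choose_aux hm hmn
    have h2 : (0 : ℝ) < ((n : ℝ) / m) ^ m := by positivity
    calc 1 / (n.choose m : ℝ) ≤ 1 / (((n : ℝ) / m) ^ m) :=
          one_div_le_one_div_of_le h2 h1
      _ = ((m : ℝ) / n) ^ m := by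
          rw [one_div, ← inv_pow, inv_div]
  calc ((n.choose m : ℝ)) ^ 2 / ((l * n).choose (l * m) : ℝ)
      ≤ (1 / (n.choose m : ℝ)) ^ (l - 2) := by rw [← step2]; exact step1
    _ ≤ (((m : ℝ) / n) ^ m) ^ (l - 2) :=
        pow_le_pow_left₀ (by positivity) hinv _
    _ = ((m : ℝ) / n) ^ ((l - 2) * m) := by rw [← pow_mul, Nat.mul_comm]
end

section
/- For a real number a with 0 < a ≤ 1 and natural numbers n, m with a·n an integer and m ≤ a·n, binom(a·n, m) ≤ a^m · binom(n, m). -/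
theorem stmt7 {a : ℝ} (ha0 : 0 < a) (ha1 : a ≤ 1) {n an m : ℕ}
    (han : (an : ℝ) = a * n) (hm : m ≤ an) :
    ((an.choose m : ℝ)) ≤ a ^ m * (n.choose m : ℝ) := by
  have hann : an ≤ n := by
    have : (an : ℝ) ≤ n := by
      rw [han]
      nlinarith [Nat.cast_nonneg (α := ℝ) n]
    exact_mod_cast this
  -- reduce to descFactorial
  have key : (an.descFactorial m : ℝ) ≤ a ^ m * (n.descFactorial m : ℝ) := by
    rw [Nat.descFactorial_eq_prod_range, Nat.descFactorial_eq_prod_range]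
    rw [Nat.cast_prod, Nat.cast_prod,
      show a ^ m = ∏ _i ∈ Finset.range m, a by simp, ← Finset.prod_mul_distrib]
    apply Finset.prod_le_prod
    · intro i hi
      simp only [Finset.mem_range] at hi
      have : i ≤ an := le_of_lt (lt_of_lt_of_le hi hm)
      rw [Nat.cast_sub this]
      have : (i : ℝ) ≤ an := by exact_mod_cast this
      linarith
    · intro i hi
      simp only [Finset.mem_range] at hi
      have h1 : i ≤ an := le_of_lt (lt_of_lt_of_le hi hm)
      rw [Nat.cast_sub h1, Nat.cast_sub (h1.trans hann), han]
      have hia : (i : ℝ) * a ≤ i := by nlinarith [Nat.cast_nonneg (α := ℝ) i]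
      nlinarith
  have hfac : (0 : ℝ) < (m.factorial : ℝ) := by exact_mod_cast m.factorial_pos
  have e1 : (an.choose m : ℝ) = (an.descFactorial m : ℝ) / m.factorial := by
    rw [eq_div_iff hfac.ne', ← Nat.cast_mul, Nat.descFactorial_eq_factorial_mul_choose,
      Nat.cast_mul, mul_comm]; push_cast; ring
  have e2 : (n.choose m : ℝ) = (n.descFactorial m : ℝ) / m.factorial := by
    rw [eq_div_iff hfac.ne', ← Nat.cast_mul, Nat.descFactorial_eq_factorial_mul_choose,
      Nat.cast_mul, mul_comm]; push_cast; ring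
  rw [e1, e2, ← mul_div_assoc]
  gcongr
end

section
/- For a symmetric Boolean function f : {-1,1}^t → {-1,1}, viewed as a univariate function F on {0,1,…,t} of the Hamming weight, the sign-degree of f equals the number of indices k ∈ {0,…,t−1} with F(k) ≠ F(k+1) (the number of sign changes of F). -/
open scoped Classical

noncomputable def sgnval (b : Bool) : ℝ := if b then 1 else -1

noncomputable def chi {n : ℕ} (S : Finset (Fin n)) (x : Fin n → Bool) : ℝ :=
  ∏ i ∈ S, sgnval (x i)

noncomputable def fourierCoef {n : ℕ} (f : (Fin n → Bool) → ℝ) (S : Finset (Fin n)) : ℝ :=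
  (∑ x : Fin n → Bool, f x * chi S x) / 2 ^ n

noncomputable def negweight {t : ℕ} (x : Fin t → Bool) : ℕ :=
  (Finset.univ.filter (fun i => x i = false)).card

noncomputable def sdeg {t : ℕ} (f : (Fin t → Bool) → ℝ) : ℕ :=
  sInf {d : ℕ | ∃ c : Finset (Fin t) → ℝ,
    (∀ S : Finset (Fin t), d < S.card → c S = 0) ∧
    ∀ x, 0 < f x * ∑ S : Finset (Fin t), c S * chi S x}

/-
Write `|x|` for `negweight x` and `C` for the set of sign changes of `F`.
For the upper bound, `F 0 * ∏ j ∈ C, (j + 1/2 - |x|)` has degree `#C`, since `|x|` is affine in the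
characters `chi {i}`, and at weight `w` its sign is `F 0 * (-1) ^ #{j ∈ C | j < w} = F w`.
For the lower bound we symmetrize: summing a sign-representation of degree `d` over the level
`|x| = k` gives `t.choose k * Q.eval k` for a univariate `Q` of degree `≤ d`. So `Q k` has the sign
of `F k`, and `Q` has a root in `(k, k + 1)` for every `k ∈ C`.
-/

open Finset Polynomial

lemma sgnval_mul_self (b : Bool) : sgnval b * sgnval b = 1 := by
  cases b <;> norm_num [sgnval]

lemma chi_mul_chi {n : ℕ} (S T : Finset (Fin n)) (x : Fin n → Bool) :
    chi S x * chi T x = chi (symmDiff S T) x := by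
  have hsq : (∏ i ∈ S ∩ T, sgnval (x i)) * ∏ i ∈ S ∩ T, sgnval (x i) = 1 := by
    rw [← prod_mul_distrib]
    exact prod_eq_one fun i _ => sgnval_mul_self _
  rw [chi, chi, chi, ← prod_union_inter, symmDiff_eq_sup_sdiff_inf, sup_eq_union, inf_eq_inter,
    ← prod_sdiff inter_subset_union, mul_assoc, hsq, mul_one]

lemma card_symmDiff_le {α : Type*} [DecidableEq α] (S T : Finset α) :
    (symmDiff S T).card ≤ S.card + T.card :=
  (card_le_card symmDiff_le_sup).trans (card_union_le S T)

lemma chi_empty {n : ℕ} : chi (∅ : Finset (Fin n)) = 1 := by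
  funext x; simp [chi]

def degLE (t d : ℕ) : Submodule ℝ ((Fin t → Bool) → ℝ) :=
  Submodule.span ℝ (chi '' {S | S.card ≤ d})

lemma chi_mem_degLE {t d : ℕ} {S : Finset (Fin t)} (h : S.card ≤ d) : chi S ∈ degLE t d :=
  Submodule.subset_span ⟨S, h, rfl⟩

lemma degLE_mul_le (t a b : ℕ) : degLE t a * degLE t b ≤ degLE t (a + b) := by
  rw [degLE, degLE, Submodule.span_mul_span]
  refine Submodule.span_mono ?_
  rintro _ ⟨_, ⟨S, hS, rfl⟩, _, ⟨T, hT, rfl⟩, rfl⟩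
  refine ⟨symmDiff S T, (card_symmDiff_le S T).trans (add_le_add hS hT), ?_⟩
  funext x
  exact (chi_mul_chi S T x).symm

lemma prod_mem_degLE {t : ℕ} {ι : Type*} (s : Finset ι) {g : ι → (Fin t → Bool) → ℝ}
    (hg : ∀ i ∈ s, g i ∈ degLE t 1) : ∏ i ∈ s, g i ∈ degLE t s.card := by
  classical
  induction s using Finset.induction_on with
  | empty => simpa [chi_empty] using chi_mem_degLE (t := t) (S := ∅) le_rfl
  | insert a s ha ih =>
    rw [prod_insert ha, card_insert_of_notMem ha, add_comm]
    exact degLE_mul_le t 1 s.card (Submodule.mul_mem_mul (hg a (mem_insert_self a s))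
      (ih fun i hi => hg i (mem_insert_of_mem hi)))

lemma sum_mem_degLE {t d : ℕ} {c : Finset (Fin t) → ℝ} (hc : ∀ S, d < S.card → c S = 0) :
    (fun x => ∑ S, c S * chi S x) ∈ degLE t d := by
  have : (fun x => ∑ S, c S * chi S x) = ∑ S, c S • chi S := by
    funext x; simp
  rw [this]
  refine Submodule.sum_mem _ fun S _ => ?_
  by_cases hS : d < S.card
  · simp [hc S hS]
  · exact Submodule.smul_mem _ _ (chi_mem_degLE (not_lt.mp hS))

lemma exists_coeffs_of_mem_degLE {t d : ℕ} {g : (Fin t → Bool) → ℝ} (hg : g ∈ degLE t d) :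
    ∃ c : Finset (Fin t) → ℝ, (∀ S, d < S.card → c S = 0) ∧ ∀ x, g x = ∑ S, c S * chi S x := by
  induction hg using Submodule.span_induction with
  | mem _ h =>
    obtain ⟨S, hS : S.card ≤ d, rfl⟩ := h
    refine ⟨Pi.single S 1, fun U hU => Pi.single_eq_of_ne (by rintro rfl; omega) _, fun x => ?_⟩
    simp [Pi.single_apply]
  | zero => exact ⟨0, fun _ _ => rfl, fun _ => by simp⟩
  | add g h _ _ hg hh =>
    obtain ⟨c, hc, hgc⟩ := hg
    obtain ⟨e, he, hhe⟩ := hh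
    exact ⟨c + e, fun S hS => by simp [hc S hS, he S hS], fun x => by
      simp [hgc, hhe, add_mul, sum_add_distrib]⟩
  | smul a g _ hg =>
    obtain ⟨c, hc, hgc⟩ := hg
    exact ⟨a • c, fun S hS => by simp [hc S hS], fun x => by
      simp [hgc, mul_sum, mul_assoc]⟩

def SignRepresents {t : ℕ} (f p : (Fin t → Bool) → ℝ) : Prop :=
  ∀ x, 0 < f x * p x

lemma sdeg_eq_sInf_degLE {t : ℕ} (f : (Fin t → Bool) → ℝ) :
    sdeg f = sInf {d | ∃ p ∈ degLE t d, SignRepresents f p} := by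
  rw [sdeg]
  congr 1
  ext d
  constructor
  · rintro ⟨c, hc, hpos⟩
    exact ⟨_, sum_mem_degLE hc, hpos⟩
  · rintro ⟨p, hp, hpos⟩
    obtain ⟨c, hc, hpc⟩ := exists_coeffs_of_mem_degLE hp
    exact ⟨c, hc, fun x => hpc x ▸ hpos x⟩

lemma natCast_negweight_eq_sum {t : ℕ} (x : Fin t → Bool) :
    (negweight x : ℝ) = ∑ i, (1 - sgnval (x i)) / 2 := by
  rw [negweight, natCast_card_filter]
  refine sum_congr rfl fun i _ => ?_
  cases x i <;> norm_num [sgnval]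

lemma const_sub_negweight_mem_degLE (t : ℕ) (a : ℝ) :
    (fun x => a - (negweight x : ℝ)) ∈ degLE t 1 := by
  have : (fun x : Fin t → Bool => a - (negweight x : ℝ))
      = a • chi ∅ - ∑ i, (2⁻¹ : ℝ) • (chi ∅ - chi {i}) := by
    funext x
    simp [natCast_negweight_eq_sum, chi_empty, chi, div_eq_inv_mul]
  rw [this]
  refine sub_mem (Submodule.smul_mem _ _ (chi_mem_degLE (by simp)))
    (Submodule.sum_mem _ fun i _ => Submodule.smul_mem _ _
      (sub_mem (chi_mem_degLE (by simp)) (chi_mem_degLE (by simp))))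

noncomputable def signChanges (t : ℕ) (F : ℕ → ℝ) : Finset ℕ :=
  (range t).filter fun k => F k ≠ F (k + 1)

section SignChanges

variable {t : ℕ} {F : ℕ → ℝ}

lemma succ_eq_of_notMem_signChanges {k : ℕ} (hk : k < t) (h : k ∉ signChanges t F) :
    F (k + 1) = F k := by
  by_contra hne
  exact h (mem_filter.mpr ⟨mem_range.mpr hk, Ne.symm hne⟩)

lemma succ_eq_neg_of_mem_signChanges (hF : ∀ k ≤ t, F k = 1 ∨ F k = -1) {k : ℕ}
    (h : k ∈ signChanges t F) : F (k + 1) = -F k := by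
  obtain ⟨hk, hne⟩ := mem_filter.mp h
  have hk := mem_range.mp hk
  rcases hF k hk.le with h0 | h0 <;> rcases hF (k + 1) hk with h1 | h1 <;>
    simp_all

lemma eq_mul_prod_signChanges (hF : ∀ k ≤ t, F k = 1 ∨ F k = -1) {w : ℕ} (hw : w ≤ t) :
    F w = F 0 * ∏ j ∈ signChanges t F, if j < w then -1 else 1 := by
  induction w with
  | zero => simp
  | succ w ih =>
    have hsplit : ∀ j, (if j < w + 1 then (-1 : ℝ) else 1)
        = (if j < w then -1 else 1) * if w = j then -1 else 1 := by
      intro j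
      split_ifs <;> first | omega | norm_num
    rw [prod_congr rfl fun j _ => hsplit j, prod_mul_distrib, prod_ite_eq, ← mul_assoc,
      ← ih (by omega)]
    split_ifs with hmem
    · rw [succ_eq_neg_of_mem_signChanges hF hmem, mul_neg_one]
    · rw [succ_eq_of_notMem_signChanges (by omega) hmem, mul_one]

end SignChanges

lemma exists_signRepresents_mem_degLE_card_signChanges {t : ℕ} (f : (Fin t → Bool) → ℝ)
    {F : ℕ → ℝ} (hF : ∀ k ≤ t, F k = 1 ∨ F k = -1) (hsym : ∀ x, f x = F (negweight x)) :
    ∃ p ∈ degLE t (signChanges t F).card, SignRepresents f p := by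
  refine ⟨F 0 • ∏ j ∈ signChanges t F, fun x => ((j : ℝ) + 1 / 2) - negweight x,
    Submodule.smul_mem _ _ (prod_mem_degLE _ fun j _ => const_sub_negweight_mem_degLE t _),
    fun x => ?_⟩
  have hF0 : F 0 * F 0 = 1 := by rcases hF 0 (Nat.zero_le t) with h | h <;> rw [h] <;> norm_num
  have hw : negweight x ≤ t := (card_filter_le _ _).trans (card_fin t).le
  rw [Pi.smul_apply, Finset.prod_apply, hsym, eq_mul_prod_signChanges hF hw, smul_eq_mul,
    mul_mul_mul_comm, hF0, one_mul, ← prod_mul_distrib]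
  refine prod_pos fun j _ => ?_
  split_ifs with hj
  · have : (j : ℝ) + 1 ≤ negweight x := by exact_mod_cast hj
    linarith
  · have : (negweight x : ℝ) ≤ j := by exact_mod_cast not_lt.mp hj
    linarith

section Level

variable {t : ℕ}

def onSet (T : Finset (Fin t)) : Fin t → Bool := fun i => decide (i ∉ T)

lemma negweight_onSet (T : Finset (Fin t)) : negweight (onSet T) = T.card := by
  simp [negweight, onSet]

lemma chi_onSet (S T : Finset (Fin t)) :
    chi S (onSet T) = ∑ U ∈ S.powerset, if U ⊆ T then (-2 : ℝ) ^ U.card else 0 := by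
  have h : ∀ i, sgnval (onSet T i) = 1 + if i ∈ T then -2 else 0 := by
    intro i; by_cases hi : i ∈ T <;> norm_num [onSet, sgnval, hi]
  simp only [chi, h, prod_one_add, prod_ite_zero, prod_const, ← subset_iff]

def levelSum (g : (Fin t → Bool) → ℝ) (k : ℕ) : ℝ :=
  ∑ T ∈ powersetCard k (univ : Finset (Fin t)), g (onSet T)

lemma card_superset_mul_choose (U : Finset (Fin t)) (k : ℕ) :
    (((powersetCard k univ).filter (U ⊆ ·)).card * t.choose U.card : ℕ)
      = t.choose k * k.choose U.card := by
  by_cases hUk : U.card ≤ k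
  · rw [card_filter_powersetCard_subset U univ k (subset_univ U) hUk, card_univ,
      Fintype.card_fin, Nat.choose_mul hUk, mul_comm]
  · rw [Nat.choose_eq_zero_of_lt (not_le.mp hUk), mul_zero, card_eq_zero.mpr, zero_mul]
    refine filter_false_of_mem fun T hT hUT => hUk ?_
    exact (card_le_card hUT).trans (mem_powersetCard.mp hT).2.le

-- The level-`k` sum of `x ↦ ∏ i ∈ U, [x i = false]` counts the `k`-sets containing `U`, that is
-- `t.choose k * k.choose #U / t.choose #U`, and `k.choose u = (descPochhammer ℝ u).eval k / u !`.
noncomputable def levelPoly (S : Finset (Fin t)) : ℝ[X] :=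
  ∑ U ∈ S.powerset, C ((-2 : ℝ) ^ U.card / (t.choose U.card * U.card.factorial)) *
    descPochhammer ℝ U.card

lemma natDegree_levelPoly_le (S : Finset (Fin t)) : (levelPoly S).natDegree ≤ S.card :=
  natDegree_sum_le_of_forall_le _ _ fun U hU => (natDegree_C_mul_le _ _).trans <|
    (descPochhammer_natDegree ℝ U.card).trans_le (card_le_card (mem_powerset.mp hU))

lemma levelSum_chi (S : Finset (Fin t)) (k : ℕ) :
    levelSum (chi S) k = t.choose k * (levelPoly S).eval (k : ℝ) := by
  rw [levelSum, levelPoly]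
  simp only [chi_onSet, eval_finsetSum, eval_mul, eval_C, descPochhammer_eval_eq_descFactorial,
    Nat.descFactorial_eq_factorial_mul_choose, mul_sum]
  rw [sum_comm]
  refine sum_congr rfl fun U hU => ?_
  have hcount := card_superset_mul_choose U k
  have hpos : (t.choose U.card : ℝ) ≠ 0 := by
    have := card_le_univ U
    rw [Fintype.card_fin] at this
    exact_mod_cast (Nat.choose_pos this).ne'
  have hcount' : (((powersetCard k univ).filter (U ⊆ ·)).card : ℝ) * t.choose U.card
      = t.choose k * k.choose U.card := by exact_mod_cast hcount
  rw [sum_ite, sum_const_zero, add_zero, sum_const, nsmul_eq_mul]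
  field_simp
  push_cast
  linear_combination (U.card.factorial : ℝ) * hcount'

lemma exists_levelSum_eq_of_mem_degLE {d : ℕ} {g : (Fin t → Bool) → ℝ} (hg : g ∈ degLE t d) :
    ∃ Q : ℝ[X], Q.natDegree ≤ d ∧ ∀ k, levelSum g k = t.choose k * Q.eval (k : ℝ) := by
  induction hg using Submodule.span_induction with
  | mem _ h =>
    obtain ⟨S, hS : S.card ≤ d, rfl⟩ := h
    exact ⟨levelPoly S, (natDegree_levelPoly_le S).trans hS, levelSum_chi S⟩
  | zero => exact ⟨0, by simp, fun k => by simp [levelSum]⟩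
  | add g h _ _ hg hh =>
    obtain ⟨P, hPd, hP⟩ := hg
    obtain ⟨Q, hQd, hQ⟩ := hh
    refine ⟨P + Q, (natDegree_add_le P Q).trans (max_le hPd hQd), fun k => ?_⟩
    simp only [levelSum, Pi.add_apply, sum_add_distrib, eval_add, mul_add] at hP hQ ⊢
    rw [hP, hQ]
  | smul a g _ hg =>
    obtain ⟨P, hPd, hP⟩ := hg
    refine ⟨C a * P, (natDegree_C_mul_le a P).trans hPd, fun k => ?_⟩
    simp only [levelSum, Pi.smul_apply, smul_eq_mul, ← mul_sum, eval_mul, eval_C] at hP ⊢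
    rw [hP, mul_left_comm]

end Level

lemma exists_mem_Ioo_isRoot_of_mul_neg {Q : ℝ[X]} {a b : ℝ} (hab : a ≤ b)
    (h : Q.eval a * Q.eval b < 0) : ∃ z ∈ Set.Ioo a b, Q.IsRoot z := by
  have hcont : ContinuousOn (fun z => Q.eval z) (Set.Icc a b) := Q.continuous.continuousOn
  rcases mul_neg_iff.mp h with ⟨ha, hb⟩ | ⟨ha, hb⟩
  · exact intermediate_value_Ioo' hab hcont ⟨hb, ha⟩
  · exact intermediate_value_Ioo hab hcont ⟨ha, hb⟩

lemma card_le_natDegree_of_mul_eval_succ_neg {Q : ℝ[X]} {C : Finset ℕ}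
    (h : ∀ k ∈ C, Q.eval (k : ℝ) * Q.eval ((k : ℝ) + 1) < 0) : C.card ≤ Q.natDegree := by
  by_cases hQ : Q = 0
  · simp [eq_empty_of_forall_notMem (s := C) fun k hk => by simpa [hQ] using h k hk]
  have hroot : ∀ k ∈ C, ∃ z ∈ Set.Ioo (k : ℝ) (k + 1), Q.IsRoot z := fun k hk =>
    exists_mem_Ioo_isRoot_of_mul_neg (by linarith) (h k hk)
  choose! z hz hzroot using hroot
  have hfloor : Set.LeftInvOn (fun r : ℝ => ⌊r⌋₊) z C := fun k hk =>
    (Nat.floor_eq_iff (by linarith [(hz k hk).1, k.cast_nonneg (α := ℝ)])).mpr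
      ⟨(hz k hk).1.le, (hz k hk).2⟩
  calc C.card ≤ Q.roots.toFinset.card :=
        card_le_card_of_injOn z (fun k hk => Multiset.mem_toFinset.mpr
          ((mem_roots hQ).mpr (hzroot k hk))) hfloor.injOn
    _ ≤ Multiset.card Q.roots := Multiset.toFinset_card_le _
    _ ≤ Q.natDegree := card_roots' Q

lemma card_signChanges_le_of_signRepresents {t d : ℕ} {f : (Fin t → Bool) → ℝ} {F : ℕ → ℝ}
    (hF : ∀ k ≤ t, F k = 1 ∨ F k = -1) (hsym : ∀ x, f x = F (negweight x))
    {p : (Fin t → Bool) → ℝ} (hp : p ∈ degLE t d) (hpos : SignRepresents f p) :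
    (signChanges t F).card ≤ d := by
  obtain ⟨Q, hQd, hQ⟩ := exists_levelSum_eq_of_mem_degLE hp
  have hlevel : ∀ k ≤ t, 0 < F k * Q.eval (k : ℝ) := by
    intro k hk
    have hsum : 0 < F k * levelSum p k := by
      rw [levelSum, mul_sum]
      refine sum_pos (fun T hT => ?_) (powersetCard_nonempty.mpr (by simpa using hk))
      have := hpos (onSet T)
      rwa [hsym, negweight_onSet, (mem_powersetCard.mp hT).2] at this
    rw [hQ, mul_left_comm] at hsum
    exact pos_of_mul_pos_right hsum (Nat.cast_nonneg _)
  refine (card_le_natDegree_of_mul_eval_succ_neg fun k hk => ?_).trans hQd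
  have hkt := mem_range.mp (mem_filter.mp hk).1
  have h0 := hlevel k hkt.le
  have h1 := hlevel (k + 1) hkt
  rw [succ_eq_neg_of_mem_signChanges hF hk, Nat.cast_succ] at h1
  have hsq : F k * F k = 1 := by rcases hF k hkt.le with h | h <;> rw [h] <;> norm_num
  nlinarith

theorem stmt9 {t : ℕ} (f : (Fin t → Bool) → ℝ) (F : ℕ → ℝ)
    (hF : ∀ k ≤ t, F k = 1 ∨ F k = -1)
    (hsym : ∀ x, f x = F (negweight x)) :
    sdeg f = ((Finset.range t).filter (fun k => F k ≠ F (k + 1))).card := by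
  rw [sdeg_eq_sInf_degLE]
  have hmem : (signChanges t F).card ∈ {d | ∃ p ∈ degLE t d, SignRepresents f p} :=
    exists_signRepresents_mem_degLE_card_signChanges f hF hsym
  refine le_antisymm (Nat.sInf_le hmem) ?_
  obtain ⟨p, hp, hpos⟩ := Nat.sInf_mem ⟨_, hmem⟩
  exact card_signChanges_le_of_signRepresents hF hsym hp hpos
end

section
/- Let f : {-1,1}^t → {-1,1} be a symmetric Boolean function with at least 2 sign changes (as a function of Hamming weight), expressed via thresholds 0 ≤ θ₁ < θ₂ < ⋯ < θ_s < θ_{s+1} = t with s ≥ 2, and suppose either t is even or θ₂ − θ₁ < t − 1. Then there exist natural numbers a, b such that f restricted to Hamming weight b equals 1, at weight a + b equals −1, and at weight 2a + b equals 1 (after possibly negating f), with b ≤ t, a + b ≤ t and 2a + b ≤ t. Consequently, for every x' ∈ {-1,1}² there exists x ∈ {-1,1}^t with f(x) = PARITY(x') and |x| = a|x'| + b. -/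
/-
Let `c j` count the thresholds `θ k`, `1 ≤ k ≤ s`, below `j`, so that `F j = (-1) ^ c j`. If `b`,
`a + b`, `2a + b` lie in consecutive blocks `(θ m, θ (m + 1)]`, then `(-1) ^ m F (a w + b) = (-1) ^ w`
for `w ≤ 2`, so any `x` of weight `a |x'| + b` has `(-1) ^ m f x = (-1) ^ |x'| = PARITY x'`.
Writing `θ 2 - θ 1` as `2r` or `2r + 1`, a progression of step `r + 1` ending at `θ 2 + 1` or `θ 2 + 2`
starts at `θ 1` (odd gap), at `θ 1 - 1` (even gap, `θ 1 ≥ 1`) or at `0` (even gap, `θ 1 = 0`,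
`θ 3 ≥ θ 2 + 2`). In the remaining case `θ 3 = θ 2 + 1` the progression `θ 2, θ 2 + 1, θ 2 + 2` works.
-/

open scoped Classical

open Finset

/-- `j` lies in the `m`-th block `(θ m, θ (m + 1)]`, the block `0` being `[0, θ 1]`. -/
def InBlock (θ : ℕ → ℕ) (m j : ℕ) : Prop :=
  (1 ≤ m → θ m < j) ∧ j ≤ θ (m + 1)

theorem card_filter_lt_eq_of_inBlock {θ : ℕ → ℕ} {s m j : ℕ}
    (hθ : MonotoneOn θ (Set.Icc 1 s)) (hm : m ≤ s) (hj : InBlock θ m j) :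
    #{k ∈ Icc 1 s | θ k < j} = m := by
  obtain ⟨hlo, hhi⟩ := hj
  have hfilter : {k ∈ Icc 1 s | θ k < j} = Icc 1 m := by
    ext k
    simp only [mem_filter, mem_Icc]
    constructor
    · rintro ⟨⟨hk1, hks⟩, hkj⟩
      refine ⟨hk1, not_lt.1 fun hmk => hkj.not_ge ?_⟩
      exact hhi.trans (hθ ⟨by omega, by omega⟩ ⟨hk1, hks⟩ hmk)
    · rintro ⟨hk1, hkm⟩
      exact ⟨⟨hk1, hkm.trans hm⟩,
        (hθ ⟨hk1, by omega⟩ ⟨by omega, hm⟩ hkm).trans_lt (hlo (hk1.trans hkm))⟩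
  simp [hfilter]

theorem exists_progression_inBlock {θ : ℕ → ℕ} {s t : ℕ} (hs : 2 ≤ s)
    (hθ : StrictMonoOn θ (Set.Icc 1 (s + 1))) (hlast : θ (s + 1) = t)
    (hcase : Even t ∨ θ 2 - θ 1 < t - 1) :
    ∃ m a b : ℕ, m + 2 ≤ s ∧ ∀ w ≤ 2, InBlock θ (m + w) (a * w + b) := by
  have hlt : ∀ k, 1 ≤ k → k ≤ s → θ k < θ (k + 1) := fun k hk hks =>
    hθ ⟨hk, by omega⟩ ⟨by omega, by omega⟩ (by omega)
  have h12 : θ 1 < θ 2 := hlt 1 le_rfl (by omega)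
  have h23 : θ 2 < θ 3 := hlt 2 (by omega) hs
  rcases Nat.even_or_odd (θ 2 - θ 1) with ⟨r, hd⟩ | ⟨r, hd⟩
  · by_cases hθ1 : 1 ≤ θ 1
    · refine ⟨0, r + 1, θ 1 - 1, by omega, fun w hw => ?_⟩
      interval_cases w <;> norm_num [InBlock] <;> omega
    by_cases hgap : θ 2 + 2 ≤ θ 3
    · refine ⟨0, r + 1, 0, by omega, fun w hw => ?_⟩
      interval_cases w <;> norm_num [InBlock] <;> omega
    -- Here `θ 1 = 0`, `θ 3 = θ 2 + 1` and `θ 2` is even, so `s = 2` would make `t = θ 3` odd.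
    have hs3 : 3 ≤ s := by
      by_contra hs3
      have : θ 3 = t := by rw [← hlast, show s = 2 by omega]
      rcases hcase with ⟨r', hr'⟩ | hcase <;> omega
    have h34 : θ 3 < θ 4 := hlt 3 (by omega) hs3
    refine ⟨1, 1, θ 2, by omega, fun w hw => ?_⟩
    interval_cases w <;> norm_num [InBlock] <;> omega
  · refine ⟨0, r + 1, θ 1, by omega, fun w hw => ?_⟩
    interval_cases w <;> norm_num [InBlock] <;> omega

theorem negweight_le {n : ℕ} (x : Fin n → Bool) : negweight x ≤ n :=
  (card_filter_le _ _).trans_eq (card_fin n)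

theorem exists_negweight_eq {t w : ℕ} (hw : w ≤ t) : ∃ x : Fin t → Bool, negweight x = w := by
  refine ⟨fun i => decide (w ≤ i.val), ?_⟩
  simpa [negweight, hw] using Fin.card_filter_val_lt (n := t) (m := w)

theorem prod_sgnval_eq_neg_one_pow_negweight {n : ℕ} (x : Fin n → Bool) :
    ∏ i, sgnval (x i) = (-1) ^ negweight x := by
  simp [sgnval, prod_ite, negweight]

theorem exists_negweight_eq_affine_of_alternating {t n a b : ℕ} {ε : ℝ} {F : ℕ → ℝ}
    {f : (Fin t → Bool) → ℝ} (hf : ∀ x, f x = F (negweight x)) (hle : a * n + b ≤ t)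
    (hsign : ∀ w ≤ n, ε * F (a * w + b) = (-1) ^ w) (x' : Fin n → Bool) :
    ∃ x : Fin t → Bool, ε * f x = ∏ i, sgnval (x' i) ∧ negweight x = a * negweight x' + b := by
  have hw := negweight_le x'
  obtain ⟨x, hx⟩ := exists_negweight_eq (w := a * negweight x' + b)
    (le_trans (by gcongr) hle)
  exact ⟨x, by rw [hf, hx, hsign _ hw, prod_sgnval_eq_neg_one_pow_negweight], hx⟩

theorem stmt10 {t s : ℕ} (hs : 2 ≤ s) (θ : ℕ → ℕ)
    (hmono : StrictMonoOn θ (Set.Icc 1 (s + 1))) (hlast : θ (s + 1) = t)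
    (hcase : Even t ∨ θ 2 - θ 1 < t - 1)
    (F : ℕ → ℝ)
    (hF : ∀ j, F j = (-1 : ℝ) ^ ((Finset.Icc 1 s).filter (fun k => θ k < j)).card)
    (f : (Fin t → Bool) → ℝ) (hf : ∀ x, f x = F (negweight x)) :
    ∃ (ε : ℝ) (a b : ℕ), (ε = 1 ∨ ε = -1) ∧
      b ≤ t ∧ a + b ≤ t ∧ 2 * a + b ≤ t ∧
      ε * F b = 1 ∧ ε * F (a + b) = -1 ∧ ε * F (2 * a + b) = 1 ∧
      ∀ x' : Fin 2 → Bool, ∃ x : Fin t → Bool,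
        ε * f x = sgnval (x' 0) * sgnval (x' 1) ∧
        negweight x = a * negweight x' + b := by
  obtain ⟨m, a, b, hms, hblock⟩ := exists_progression_inBlock hs hmono hlast hcase
  have hsign : ∀ w ≤ 2, (-1) ^ m * F (a * w + b) = (-1) ^ w := fun w hw => by
    rw [hF, card_filter_lt_eq_of_inBlock (hmono.monotoneOn.mono (Set.Icc_subset_Icc_right
      (by omega))) (by omega) (hblock w hw), pow_add, ← mul_assoc, ← pow_add,
      Even.neg_one_pow ⟨m, rfl⟩, one_mul]
  have ht : a * 2 + b ≤ t :=
    hlast ▸ (hblock 2 le_rfl).2.trans (hmono.monotoneOn ⟨by omega, by omega⟩ ⟨by omega, le_rfl⟩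
      (by omega))
  refine ⟨(-1) ^ m, a, b, neg_one_pow_eq_or ℝ m, by omega, by omega, by omega,
    by simpa using hsign 0 (by omega), by simpa using hsign 1 (by omega),
    by simpa [mul_comm] using hsign 2 le_rfl, fun x' => ?_⟩
  simpa [Fin.prod_univ_two] using exists_negweight_eq_affine_of_alternating hf ht hsign x'
end
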